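/- Fix θ ∈ (0,π) and let Q_u = ⋂_{m∈ℤ} H_m where H_m = {(z,α,r) ∈ tildeL : r·cos(α+mθ) ≤ 1 or |α+mθ| ≥ π/2}. Then every point (z,α,r) ∈ Q_u satisfies r ≤ 1/cos(θ/2). -/
import Mathlib


open Real

/-- `tildeL = {(z,α,r) ∈ ℂ×ℝ×ℝ : 0 < r, |z| < r}`. -/
def tL : Set (ℂ × ℝ × ℝ) := {x | 0 < x.2.2 ∧ ‖x.1‖ < x.2.2}

/-- `H_m = {(z,α,r) ∈ tildeL : r·cos(α+mθ) ≤ 1 or |α+mθ| ≥ π/2}`. -/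
noncomputable def Hhalf (θ : ℝ) (m : ℤ) : Set (ℂ × ℝ × ℝ) :=
  {x ∈ tL | x.2.2 * Real.cos (x.2.1 + (m : ℝ) * θ) ≤ 1 ∨ π / 2 ≤ |x.2.1 + (m : ℝ) * θ|}

/-- The prismatic set `Q_u = ⋂_{m∈ℤ} H_m`. -/
noncomputable def Qu (θ : ℝ) : Set (ℂ × ℝ × ℝ) := ⋂ m : ℤ, Hhalf θ m

theorem stmt15 (θ : ℝ) (hθ : 0 < θ) (hθπ : θ < π) :
    ∀ x ∈ Qu θ, x.2.2 ≤ 1 / Real.cos (θ / 2) := by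
  intro x hx
  obtain ⟨z, α, r⟩ := x
  set m : ℤ := -round (α / θ) with hm
  have hxm := Set.mem_iInter.mp hx m
  obtain ⟨⟨hr, -⟩, hcase⟩ := hxm
  simp only at *
  set t : ℝ := α + (m : ℝ) * θ with ht
  have htb : |t| ≤ θ / 2 := by
    have h1 : |α / θ - round (α / θ)| ≤ 1 / 2 := abs_sub_round _
    have : t = (α / θ - round (α / θ)) * θ := by
      show α + ((-round (α / θ) : ℤ) : ℝ) * θ = _
      push_cast
      field_simp
      ring
    rw [this, abs_mul, abs_of_pos hθ]
    calc |α / θ - ↑(round (α / θ))| * θ ≤ (1/2) * θ := by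
          exact mul_le_mul_of_nonneg_right h1 hθ.le
      _ = θ / 2 := by ring
  have hhalf : θ / 2 < π / 2 := by linarith
  have hcosθ : 0 < Real.cos (θ / 2) :=
    Real.cos_pos_of_mem_Ioo ⟨by linarith, hhalf⟩
  have hcost : Real.cos (θ / 2) ≤ Real.cos t := by
    rw [← Real.cos_abs t]
    exact Real.cos_le_cos_of_nonneg_of_le_pi (abs_nonneg t) (by linarith) htb
  have hle : r * Real.cos t ≤ 1 := by
    rcases hcase with h | h
    · exact h
    · exact absurd h (by push_neg; linarith)
  rw [le_div_iff₀ hcosθ]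
  calc r * Real.cos (θ / 2) ≤ r * Real.cos t :=
        mul_le_mul_of_nonneg_left hcost hr.le
    _ ≤ 1 := hle
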